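/- Joint convexity of the two-phase jump density: let K ⊂ ℝ^m be compact and ψ a norm on ℝⁿ. The function g : K × K × ℝⁿ → [0,∞) defined by g(x, y, ν) = 0 if x = y, g(x, y, ν) = ψ(ν) if x ≠ y and |x|·|y| = 0, and g(x, y, ν) = 2ψ(ν) if x ≠ y and |x|·|y| ≠ 0, is jointly convex on K × K × ℝⁿ; that is, there exist V_h ∈ C(K;ℝⁿ), h ∈ ℕ, such that g(x, y, ν) = sup_{h ∈ ℕ} (V_h(x) − V_h(y))·ν for all (x, y, ν) ∈ K × K × ℝⁿ. -/

import Mathlib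

open MeasureTheory Metric Set Filter Topology
open scoped ENNReal NNReal RealInnerProductSpace Classical

noncomputable section

/-- `n`-dimensional Euclidean space `ℝⁿ`. -/
abbrev Euc (n : ℕ) : Type := EuclideanSpace ℝ (Fin n)

variable {n m : ℕ}

/-- The relative volume of `A` in small balls centred at `x` tends to `0`. -/
def DensTo0 (A : Set (Euc n)) (x : Euc n) : Prop :=
  Tendsto (fun r : ℝ => volume (A ∩ ball x r) / volume (ball x r)) (𝓝[>] 0) (𝓝 0)

/-- `a` is the approximate limit of `f` at `x` (relative to `Ω`). -/
def ApproxLimAt (Ω : Set (Euc n)) (f : Euc n → Euc m) (x : Euc n) (a : Euc m) : Prop :=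
  ∀ ε > 0, DensTo0 {x' ∈ Ω | ε < ‖f x' - a‖} x

/-- The approximate discontinuity set `S_f` of `f` in `Ω`. -/
def jumpSet (Ω : Set (Euc n)) (f : Euc n → Euc m) : Set (Euc n) :=
  {x ∈ Ω | ¬ ∃ a, ApproxLimAt Ω f x a}

/-- `f` has approximate limit `a` and approximate differential `A` at `x`. -/
def HasApproxDerivAt (Ω : Set (Euc n)) (f : Euc n → Euc m)
    (A : Euc n →L[ℝ] Euc m) (a : Euc m) (x : Euc n) : Prop :=
  ApproxLimAt Ω f x a ∧
  ∀ ε > 0, DensTo0 {x' ∈ Ω | ε * ‖x' - x‖ < ‖f x' - a - A (x' - x)‖} x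

/-- `x` is an approximate jump point of `f` with normal `ν` and one–sided limits `a`, `b`. -/
def IsApproxJumpAt (Ω : Set (Euc n)) (f : Euc n → Euc m) (x : Euc n)
    (ν : Euc n) (a b : Euc m) : Prop :=
  a ≠ b ∧ ‖ν‖ = 1 ∧
  (∀ ε > 0, DensTo0 {x' ∈ Ω | 0 < ⟪x' - x, ν⟫ ∧ ε < ‖f x' - a‖} x) ∧
  (∀ ε > 0, DensTo0 {x' ∈ Ω | ⟪x' - x, ν⟫ < 0 ∧ ε < ‖f x' - b‖} x)

/-- A canonical choice of jump triple `(ν(f)(x), f⁺(x), f⁻(x))` at `x`. -/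
def jumpData (Ω : Set (Euc n)) (f : Euc n → Euc m) (x : Euc n) :
    Euc n × Euc m × Euc m :=
  if h : ∃ d : Euc n × Euc m × Euc m, IsApproxJumpAt Ω f x d.1 d.2.1 d.2.2 then h.choose else 0

/-- The measure-theoretic exterior `E⁰` of a set `E`. -/
def mtExterior (E : Set (Euc n)) : Set (Euc n) := {x | DensTo0 E x}

/-- The measure-theoretic interior `E¹` of a set `E`. -/
def mtInterior (E : Set (Euc n)) : Set (Euc n) := {x | DensTo0 Eᶜ x}

/-- The essential (measure-theoretic) boundary `∂*E`. -/
def essBoundary (E : Set (Euc n)) : Set (Euc n) := (mtInterior E ∪ mtExterior E)ᶜ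

/-- `ν` is the measure-theoretic outer unit normal of `D` at `x`. -/
def IsOuterNormalAt (D : Set (Euc n)) (x ν : Euc n) : Prop :=
  ‖ν‖ = 1 ∧ DensTo0 {x' ∈ D | 0 < ⟪x' - x, ν⟫} x ∧
    DensTo0 {x' ∈ Dᶜ | ⟪x' - x, ν⟫ < 0} x

/-- A canonical choice of the measure-theoretic outer unit normal `ν(D)`. -/
def outerNormal (D : Set (Euc n)) (x : Euc n) : Euc n :=
  if h : ∃ ν, IsOuterNormalAt D x ν then h.choose else 0

/-- `D` is a set of finite perimeter in `Ω` (via Federer's criterion). -/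
def FinPerim (Ω D : Set (Euc n)) : Prop :=
  MeasurableSet D ∧ D ⊆ Ω ∧ μH[(n : ℝ) - 1] (essBoundary D ∩ Ω) < ⊤

/-- The anisotropic surface energy `∫_{∂*D ∩ B} ψ(ν(D)) dH^{n-1}`. -/
def surfE (ψ : Euc n → ℝ) (D B : Set (Euc n)) : ℝ≥0∞ :=
  ∫⁻ x in essBoundary D ∩ B, ENNReal.ofReal (ψ (outerNormal D x)) ∂ μH[(n : ℝ) - 1]

/-- The anisotropic jump energy `∫_{S_f ∩ B} ψ(ν(f)) dH^{n-1}`. -/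
def jumpE (ψ : Euc n → ℝ) (Ω : Set (Euc n)) (f : Euc n → Euc m) (B : Set (Euc n)) : ℝ≥0∞ :=
  ∫⁻ x in jumpSet Ω f ∩ B, ENNReal.ofReal (ψ ((jumpData Ω f x).1)) ∂ μH[(n : ℝ) - 1]

/-- `u` is a (generalized special) function of bounded variation on `Ω` with approximate
gradient `g`: every truncation `φ ∘ u` is `SBV`, with absolutely continuous part given by the
chain rule and jump part carried by `S_u`. -/
structure IsGSBV (Ω : Set (Euc n)) (u : Euc n → Euc m)
    (g : Euc n → (Euc n →L[ℝ] Euc m)) : Prop where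
  aemeas : AEStronglyMeasurable u (volume.restrict Ω)
  approx_deriv : ∀ᵐ x ∂(volume.restrict Ω), ∃ a, HasApproxDerivAt Ω u (g x) a x
  jump_ae : ∀ᵐ x ∂(μH[(n : ℝ) - 1].restrict (jumpSet Ω u)),
      ∃ d : Euc n × Euc m × Euc m, IsApproxJumpAt Ω u x d.1 d.2.1 d.2.2
  special : ∀ φ : Euc m → ℝ, ContDiff ℝ 1 φ → HasCompactSupport (fderiv ℝ φ) →
    ∀ η : Euc n → ℝ, ContDiff ℝ (⊤ : ℕ∞) η → HasCompactSupport η → tsupport η ⊆ Ω →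
    ∀ v : Euc n,
      ∫ x in Ω, fderiv ℝ η x v * φ (u x) =
        - ∫ x in Ω, η x * fderiv ℝ φ (u x) (g x v)
          - ∫ x in jumpSet Ω u,
              η x * ⟪(jumpData Ω u x).1, v⟫ *
                (φ ((jumpData Ω u x).2.1) - φ ((jumpData Ω u x).2.2)) ∂ μH[(n : ℝ) - 1]

/-- `u ∈ GSBV^p₁(Ω; ℝ^m)` with approximate gradient `g`. -/
def MemGSBVp1 (p : ℝ) (Ω : Set (Euc n)) (u : Euc n → Euc m)
    (g : Euc n → (Euc n →L[ℝ] Euc m)) : Prop :=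
  IsGSBV Ω u g ∧ IntegrableOn u Ω volume ∧
    MemLp g (ENNReal.ofReal p) (volume.restrict Ω) ∧
    μH[(n : ℝ) - 1] (jumpSet Ω u) < ⊤

/-- `u ∈ W^{1,q}(Ω; ℝ^m)` with weak gradient `g` (via integration by parts). -/
def MemW1p (q : ℝ≥0∞) (Ω : Set (Euc n)) (u : Euc n → Euc m)
    (g : Euc n → (Euc n →L[ℝ] Euc m)) : Prop :=
  MemLp u q (volume.restrict Ω) ∧ MemLp g q (volume.restrict Ω) ∧
  ∀ η : Euc n → ℝ, ContDiff ℝ (⊤ : ℕ∞) η → HasCompactSupport η → tsupport η ⊆ Ω →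
    ∀ v : Euc n, ∫ x in Ω, fderiv ℝ η x v • u x = - ∫ x in Ω, η x • g x v

/-- The open unit cube `(0,1)ⁿ`. -/
def unitCube (n : ℕ) : Set (Euc n) := {x | ∀ i, x i ∈ Ioo (0 : ℝ) 1}

/-- The quasiconvex envelope `W^{qc}`. -/
def qcEnvelope (W : (Euc n →L[ℝ] Euc m) → ℝ) (X : Euc n →L[ℝ] Euc m) : ℝ :=
  sInf {r | ∃ φ : Euc n → Euc m, ContDiff ℝ (⊤ : ℕ∞) φ ∧ HasCompactSupport φ ∧
      tsupport φ ⊆ unitCube n ∧ r = ∫ x in unitCube n, W (X + fderiv ℝ φ x)}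

/-- The two-phase energy `E(y, D)` (with `g` the gradient of `y`). -/
def energyE (W : (Euc n →L[ℝ] Euc m) → ℝ) (ψ : Euc n → ℝ)
    (Ω D : Set (Euc n)) (g : Euc n → (Euc n →L[ℝ] Euc m)) : ℝ :=
  (∫ x in Ω \ D, W (g x)) + (surfE ψ D Ω).toReal

/-- The relaxed two-phase energy `E^{rel}(y, D)`. -/
def energyRelE (W : (Euc n →L[ℝ] Euc m) → ℝ) (ψ : Euc n → ℝ)
    (Ω D : Set (Euc n)) (u : Euc n → Euc m)
    (g : Euc n → (Euc n →L[ℝ] Euc m)) : ℝ :=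
  (∫ x in Ω \ D, qcEnvelope W (g x)) + 2 * (jumpE ψ Ω u (mtExterior D)).toReal
    + (surfE ψ D Ω).toReal

/-- `ψ` is a norm comparable to the Euclidean norm with constants `cb`, `CB`. -/
structure IsNormWith (cb CB : ℝ) (ψ : Euc n → ℝ) : Prop where
  triangle : ∀ u v, ψ (u + v) ≤ ψ u + ψ v
  smul : ∀ (t : ℝ) v, ψ (t • v) = |t| * ψ v
  lower : ∀ v, cb * ‖v‖ ≤ ψ v
  upper : ∀ v, ψ v ≤ CB * ‖v‖

/-- `ψ` is a norm on `ℝⁿ`. -/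
structure IsNorm (ψ : Euc n → ℝ) : Prop where
  triangle : ∀ u v, ψ (u + v) ≤ ψ u + ψ v
  smul : ∀ (t : ℝ) v, ψ (t • v) = |t| * ψ v
  definite : ∀ v, ψ v = 0 → v = 0

/-- Two-sided `p`-growth condition for `W`. -/
def PGrowth (p cb CB : ℝ) (W : (Euc n →L[ℝ] Euc m) → ℝ) : Prop :=
  ∀ X, cb * ‖X‖ ^ p - CB ≤ W X ∧ W X ≤ CB * (1 + ‖X‖ ^ p)

/-- `A` is an open set with smooth boundary. -/
def HasSmoothBoundary (A : Set (Euc n)) : Prop :=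
  ∀ x ∈ frontier A, ∃ U : Set (Euc n), IsOpen U ∧ x ∈ U ∧ ∃ f : Euc n → ℝ,
    ContDiff ℝ (⊤ : ℕ∞) f ∧ (∀ y ∈ U, f y = 0 → fderiv ℝ f y ≠ 0) ∧
    A ∩ U = {y ∈ U | f y < 0} ∧ frontier A ∩ U = {y ∈ U | f y = 0}

/-- The class `C(Ω)` of intersections of `Ω` with smooth open sets. -/
def SmoothCutClass (Ω : Set (Euc n)) : Set (Set (Euc n)) :=
  {∅} ∪ {D | ∃ A : Set (Euc n), IsOpen A ∧ HasSmoothBoundary A ∧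
    μH[(n : ℝ) - 1] (frontier A ∩ frontier Ω) = 0 ∧ D = A ∩ Ω}

/-- `Ω` has Lipschitz boundary: near every boundary point it is the region above the graph
of a Lipschitz function. -/
def HasLipschitzBoundary (Ω : Set (Euc n)) : Prop :=
  ∀ x ∈ frontier Ω, ∃ U : Set (Euc n), IsOpen U ∧ x ∈ U ∧
    ∃ (e : Euc n) (f : Euc n → ℝ) (L : ℝ≥0), ‖e‖ = 1 ∧ LipschitzWith L f ∧
      Ω ∩ U = {y ∈ U | f (y - ⟪y, e⟫ • e) < ⟪y, e⟫}


namespace TwoPhaseJC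

variable {n m : ℕ}

def bmp (t : ℕ) (p z : Euc m) : ℝ := max 0 (1 - ((t : ℝ) + 1) * ‖z - p‖)

def cut (t : ℕ) (z : Euc m) : ℝ := min 1 (((t : ℝ) + 1) * ‖z‖)

def phi (t : ℕ) (p q z : Euc m) : ℝ := (bmp t p z - bmp t q z) * cut t z

lemma continuous_bmp (t : ℕ) (p : Euc m) : Continuous (bmp t p) :=
  continuous_const.max (continuous_const.sub
    (continuous_const.mul ((continuous_id.sub continuous_const).norm)))

lemma continuous_phi (t : ℕ) (p q : Euc m) : Continuous (phi t p q) :=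
  (((continuous_bmp t p).sub (continuous_bmp t q)).mul
    (continuous_const.min (continuous_const.mul continuous_norm)))

lemma bmp_nonneg {t : ℕ} {p z : Euc m} : 0 ≤ bmp t p z := le_max_left _ _

lemma bmp_le_one {t : ℕ} {p z : Euc m} : bmp t p z ≤ 1 :=
  max_le zero_le_one (sub_le_self _ (by positivity))

lemma cut_nonneg {t : ℕ} {z : Euc m} : 0 ≤ cut t z := le_min zero_le_one (by positivity)

lemma cut_le_one {t : ℕ} {z : Euc m} : cut t z ≤ 1 := min_le_left _ _

lemma phi_zero {t : ℕ} {p q : Euc m} : phi t p q 0 = 0 := by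
  simp [phi, cut]

lemma abs_phi_le_one {t : ℕ} {p q z : Euc m} : |phi t p q z| ≤ 1 := by
  rw [phi, abs_mul]
  have h1 : |bmp t p z - bmp t q z| ≤ 1 :=
    abs_le.2 ⟨by have := @bmp_nonneg m t p z; have := @bmp_le_one m t q z; linarith,
      by have := @bmp_le_one m t p z; have := @bmp_nonneg m t q z; linarith⟩
  have h2 : |cut t z| ≤ 1 := by
    rw [abs_of_nonneg cut_nonneg]; exact cut_le_one
  calc |bmp t p z - bmp t q z| * |cut t z| ≤ 1 * 1 :=
        mul_le_mul h1 h2 (abs_nonneg _) zero_le_one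
    _ = 1 := by ring

lemma abs_phi_le_s {t : ℕ} {p q z : Euc m} :
    |phi t p q z| ≤ if z = 0 then 0 else 1 := by
  split_ifs with h
  · simp [h, phi_zero]
  · exact abs_phi_le_one

lemma bmp_eq_zero {t : ℕ} {p z : Euc m} (h : 1 ≤ ((t : ℝ) + 1) * ‖z - p‖) :
    bmp t p z = 0 := max_eq_left (by linarith)

lemma one_sub_le_bmp {t : ℕ} {p z : Euc m} :
    1 - ((t : ℝ) + 1) * ‖z - p‖ ≤ bmp t p z := le_max_right _ _

lemma cut_eq_one {t : ℕ} {z : Euc m} (h : 1 ≤ ((t : ℝ) + 1) * ‖z‖) :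
    cut t z = 1 := min_eq_left h

lemma phi_approx {e : ℕ → Euc m} (he : DenseRange e) {x y : Euc m} (hxy : x ≠ y)
    {ε : ℝ} (hε : 0 < ε) :
    ∃ t p q : ℕ,
      (if x = 0 then (0 : ℝ) else 1) + (if y = 0 then (0 : ℝ) else 1) - ε ≤
        phi t (e p) (e q) x - phi t (e p) (e q) y := by
  have hd : 0 < ‖x - y‖ := by
    rw [norm_pos_iff]; exact sub_ne_zero.2 hxy
  set ix : ℝ := if x = 0 then 0 else 1 / ‖x‖ with hix
  set iy : ℝ := if y = 0 then 0 else 1 / ‖y‖ with hiy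
  have hixnn : 0 ≤ ix := by rw [hix]; split_ifs <;> positivity
  have hiynn : 0 ≤ iy := by rw [hiy]; split_ifs <;> positivity
  obtain ⟨T, hT⟩ := exists_nat_ge (4 / ‖x - y‖ + ix + iy)
  set R : ℝ := (T : ℝ) + 1 with hR
  have hRpos : 0 < R := by positivity
  have hR4 : 4 / ‖x - y‖ ≤ R := by
    have : (T : ℝ) ≤ R := by rw [hR]; linarith
    linarith
  have hRx : x ≠ 0 → 1 / ‖x‖ ≤ R := fun h => by
    have h1 : ix = 1 / ‖x‖ := by rw [hix, if_neg h]
    have : (T : ℝ) ≤ R := by rw [hR]; linarith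
    have h2 : 4 / ‖x - y‖ ≥ 0 := by positivity
    linarith [hT, hiynn]
  have hRy : y ≠ 0 → 1 / ‖y‖ ≤ R := fun h => by
    have h1 : iy = 1 / ‖y‖ := by rw [hiy, if_neg h]
    have : (T : ℝ) ≤ R := by rw [hR]; linarith
    have h2 : 4 / ‖x - y‖ ≥ 0 := by positivity
    linarith [hT, hixnn]
  have hxy4 : 4 ≤ ‖x - y‖ * R := by
    rw [div_le_iff₀ hd] at hR4
    linarith [hR4]
  clear_value R
  set δ : ℝ := min (ε / (2 * R)) (‖x - y‖ / 4) with hδ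
  have hδpos : 0 < δ := lt_min (by positivity) (by positivity)
  obtain ⟨p, hp⟩ := he.exists_dist_lt x hδpos
  obtain ⟨q, hq⟩ := he.exists_dist_lt y hδpos
  have hxp : ‖x - e p‖ < δ := by rw [← dist_eq_norm]; exact hp
  have hyq : ‖y - e q‖ < δ := by rw [← dist_eq_norm]; exact hq
  have hδ1 : δ ≤ ε / (2 * R) := min_le_left _ _
  have hδ2 : δ ≤ ‖x - y‖ / 4 := min_le_right _ _
  clear_value δ
  refine ⟨T, p, q, ?_⟩
  -- far bumps vanish
  have hfar : ∀ z w : Euc m, 3 / 4 * ‖x - y‖ ≤ ‖z - w‖ → bmp T w z = 0 := by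
    intro z w hzw
    apply bmp_eq_zero
    rw [← hR]
    have h2 := mul_le_mul_of_nonneg_left hzw hRpos.le
    linarith [h2, hxy4]
  have htri : ∀ w : Euc m, ‖x - y‖ ≤ ‖x - w‖ + ‖y - w‖ := by
    intro w
    have h5 : x - y = (x - w) - (y - w) := by abel
    calc ‖x - y‖ = ‖(x - w) - (y - w)‖ := by rw [← h5]
      _ ≤ ‖x - w‖ + ‖y - w‖ := norm_sub_le _ _
  have hxq0 : bmp T (e q) x = 0 := by
    apply hfar
    have := htri (e q)
    linarith
  have hyp0 : bmp T (e p) y = 0 := by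
    apply hfar
    have h5 : y - x = (y - e p) - (x - e p) := by abel
    have : ‖x - y‖ ≤ ‖y - e p‖ + ‖x - e p‖ := by
      calc ‖x - y‖ = ‖(y - e p) - (x - e p)‖ := by rw [← h5, norm_sub_rev]
        _ ≤ ‖y - e p‖ + ‖x - e p‖ := norm_sub_le _ _
    linarith
  -- near bumps are large
  have hRδ : R * δ ≤ ε / 2 := by
    calc R * δ ≤ R * (ε / (2 * R)) := by
          exact mul_le_mul_of_nonneg_left hδ1 hRpos.le
      _ = ε / 2 := by field_simp
  have hbpx : 1 - ε / 2 ≤ bmp T (e p) x := by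
    have h3 := @one_sub_le_bmp m T (e p) x
    rw [← hR] at h3
    have h4 : R * ‖x - e p‖ ≤ R * δ := mul_le_mul_of_nonneg_left hxp.le hRpos.le
    linarith
  have hbqy : 1 - ε / 2 ≤ bmp T (e q) y := by
    have h3 := @one_sub_le_bmp m T (e q) y
    rw [← hR] at h3
    have h4 : R * ‖y - e q‖ ≤ R * δ := mul_le_mul_of_nonneg_left hyq.le hRpos.le
    linarith
  -- phi values
  have hphix : (if x = 0 then (0 : ℝ) else 1) - ε / 2 ≤ phi T (e p) (e q) x := by
    by_cases hx : x = 0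
    · rw [if_pos hx, hx, phi_zero]; linarith
    · rw [if_neg hx]
      have hcx : cut T x = 1 := by
        apply cut_eq_one
        rw [← hR]
        have h1 := hRx hx
        have h2 : 0 < ‖x‖ := norm_pos_iff.2 hx
        rw [div_le_iff₀ h2] at h1
        linarith
      rw [phi, hxq0, hcx]
      have := @bmp_nonneg m T (e p) x
      linarith [hbpx]
  have hphiy : phi T (e p) (e q) y ≤ -(if y = 0 then (0 : ℝ) else 1) + ε / 2 := by
    by_cases hy : y = 0
    · rw [if_pos hy, hy, phi_zero]; linarith
    · rw [if_neg hy]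
      have hcy : cut T y = 1 := by
        apply cut_eq_one
        rw [← hR]
        have h1 := hRy hy
        have h2 : 0 < ‖y‖ := norm_pos_iff.2 hy
        rw [div_le_iff₀ h2] at h1
        linarith
      rw [phi, hyp0, hcy]
      linarith [hbqy]
  linarith [hphix, hphiy]

lemma psi_zero {ψ : Euc n → ℝ} (hψ : IsNorm ψ) : ψ 0 = 0 := by
  have := hψ.smul 0 0; simpa using this

lemma psi_neg {ψ : Euc n → ℝ} (hψ : IsNorm ψ) (v : Euc n) : ψ (-v) = ψ v := by
  have := hψ.smul (-1) v; simpa using this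

lemma psi_nonneg {ψ : Euc n → ℝ} (hψ : IsNorm ψ) (v : Euc n) : 0 ≤ ψ v := by
  have h1 := hψ.triangle v (-v)
  rw [add_neg_cancel, psi_zero hψ, psi_neg hψ] at h1
  linarith

lemma exists_dual {ψ : Euc n → ℝ} (hψ : IsNorm ψ) (ν : Euc n) :
    ∃ w : Euc n, (∀ v, ⟪w, v⟫ ≤ ψ v) ∧ ⟪w, ν⟫ = ψ ν := by
  by_cases hν : ν = 0
  · refine ⟨0, fun v => ?_, ?_⟩
    · simpa [inner_zero_left] using psi_nonneg hψ v
    · simp [hν, psi_zero hψ]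
  · set f : Euc n →ₗ.[ℝ] ℝ := LinearPMap.mkSpanSingleton ν (ψ ν) hν with hf
    have hfle : ∀ x : f.domain, f x ≤ ψ x := by
      rintro ⟨z, hz⟩
      have hz' : z ∈ Submodule.span ℝ {ν} := hz
      obtain ⟨c, rfl⟩ := Submodule.mem_span_singleton.1 hz'
      have h1 : f ⟨c • ν, hz⟩ = c • (ψ ν) := LinearPMap.mkSpanSingleton'_apply ν (ψ ν) _ c hz
      rw [h1, smul_eq_mul]
      calc c * ψ ν ≤ |c| * ψ ν :=
            mul_le_mul_of_nonneg_right (le_abs_self c) (psi_nonneg hψ ν)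
        _ = ψ (c • ν) := (hψ.smul c ν).symm
    obtain ⟨g, hg1, hg2⟩ := exists_extension_of_le_sublinear f ψ
      (fun c hc x => by rw [hψ.smul, abs_of_pos hc]) hψ.triangle hfle
    have hgν : g ν = ψ ν := by
      have h1 := hg1 ⟨ν, Submodule.mem_span_singleton_self ν⟩
      have h2 : f ⟨ν, Submodule.mem_span_singleton_self ν⟩ = ψ ν :=
        LinearPMap.mkSpanSingleton_apply ℝ ℝ hν (ψ ν)
      rw [h1, h2]
    refine ⟨(InnerProductSpace.toDual ℝ (Euc n)).symm (LinearMap.toContinuousLinearMap g),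
      fun v => ?_, ?_⟩
    · rw [InnerProductSpace.toDual_symm_apply]
      simpa using hg2 v
    · rw [InnerProductSpace.toDual_symm_apply]
      simpa using hgν

end TwoPhaseJC

/-- **Lemma (joint convexity of the two-phase jump density).**
For `K ⊂ ℝ^m` compact and `ψ` a norm on `ℝⁿ`, the function `g(x,y,ν)` which is `0` for
`x = y`, `ψ(ν)` for `x ≠ y` with `|x|·|y| = 0` and `2ψ(ν)` otherwise, is jointly convex:
`g(x,y,ν) = sup_h (V_h(x) − V_h(y))·ν` for suitable `V_h ∈ C(K;ℝⁿ)`. -/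
theorem two_phase_density_jointly_convex
    {n m : ℕ} {K : Set (Euc m)} (hK : IsCompact K)
    {ψ : Euc n → ℝ} (hψ : IsNorm ψ) :
    ∃ V : ℕ → Euc m → Euc n,
      (∀ h, ContinuousOn (V h) K) ∧
      ∀ x ∈ K, ∀ y ∈ K, ∀ ν : Euc n,
        (if x = y then (0 : ℝ) else if x = 0 ∨ y = 0 then ψ ν else 2 * ψ ν) =
          ⨆ h : ℕ, ⟪V h x - V h y, ν⟫ := by
  classical
  set D : Set (Euc n) := {w | ∀ v : Euc n, ⟪w, v⟫ ≤ ψ v} with hD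
  obtain ⟨c, hc_count, hc_dense⟩ := TopologicalSpace.exists_countable_dense (↥D)
  have hclos : D ⊆ closure (Subtype.val '' c) := Subtype.dense_iff.1 hc_dense
  have h0D : (0 : Euc n) ∈ D := by
    intro v
    simpa using TwoPhaseJC.psi_nonneg hψ v
  set C : Set (Euc n) := insert 0 (Subtype.val '' c) with hC
  have hC_sub : C ⊆ D := by
    rw [hC]
    refine insert_subset h0D ?_
    rintro _ ⟨w, _, rfl⟩
    exact w.2
  have hC_count : C.Countable := (hc_count.image _).insert 0
  obtain ⟨W, hW⟩ := Set.Countable.exists_eq_range hC_count ⟨0, mem_insert _ _⟩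
  have hWD : ∀ k, W k ∈ D := by
    intro k
    apply hC_sub
    rw [hW]
    exact mem_range_self k
  have hW0 : ∃ k, W k = 0 := by
    have h1 : (0 : Euc n) ∈ range W := by rw [← hW]; exact mem_insert _ _
    obtain ⟨k, hk⟩ := h1
    exact ⟨k, hk⟩
  have hWclos : D ⊆ closure (range W) := by
    rw [← hW]
    exact hclos.trans (closure_mono (subset_insert _ _))
  set e : ℕ → Euc m := TopologicalSpace.denseSeq (Euc m) with he'
  have he : DenseRange e := TopologicalSpace.denseRange_denseSeq (Euc m)
  set π : ℕ ≃ ℕ × ℕ × ℕ × ℕ := (Denumerable.eqv (ℕ × ℕ × ℕ × ℕ)).symm with hπ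
  set V : ℕ → Euc m → Euc n :=
    fun h z => TwoPhaseJC.phi (π h).1 (e (π h).2.1) (e (π h).2.2.1) z • W (π h).2.2.2 with hV
  refine ⟨V, fun h => ((TwoPhaseJC.continuous_phi _ _ _).smul continuous_const).continuousOn, ?_⟩
  intro x hx y hy ν
  have hterm : ∀ h : ℕ, ⟪V h x - V h y, ν⟫ =
      (TwoPhaseJC.phi (π h).1 (e (π h).2.1) (e (π h).2.2.1) x -
       TwoPhaseJC.phi (π h).1 (e (π h).2.1) (e (π h).2.2.1) y) * ⟪W (π h).2.2.2, ν⟫ := by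
    intro h
    rw [hV, ← sub_smul, real_inner_smul_left]
  set sx : ℝ := if x = 0 then 0 else 1 with hsx
  set sy : ℝ := if y = 0 then 0 else 1 with hsy
  set S : ℝ := if x = y then 0 else sx + sy with hS
  have hsxnn : 0 ≤ sx := by rw [hsx]; split_ifs <;> norm_num
  have hsynn : 0 ≤ sy := by rw [hsy]; split_ifs <;> norm_num
  have hSnn : 0 ≤ S := by
    rw [hS]; split_ifs
    · exact le_refl 0
    · linarith
  have hψν : 0 ≤ ψ ν := TwoPhaseJC.psi_nonneg hψ ν
  have hBabs : ∀ k, |⟪W k, ν⟫| ≤ ψ ν := by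
    intro k
    have h1 := hWD k ν
    have h2 := hWD k (-ν)
    rw [inner_neg_right, TwoPhaseJC.psi_neg hψ] at h2
    exact abs_le.2 ⟨by linarith, h1⟩
  have hA_abs : ∀ t p q : ℕ,
      |TwoPhaseJC.phi t (e p) (e q) x - TwoPhaseJC.phi t (e p) (e q) y| ≤ S := by
    intro t p q
    by_cases hxy : x = y
    · rw [hS, if_pos hxy, hxy, sub_self, abs_zero]
    · rw [hS, if_neg hxy]
      have h1 := TwoPhaseJC.abs_phi_le_s (t := t) (p := e p) (q := e q) (z := x)
      have h2 := TwoPhaseJC.abs_phi_le_s (t := t) (p := e p) (q := e q) (z := y)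
      rw [← hsx] at h1
      rw [← hsy] at h2
      calc |TwoPhaseJC.phi t (e p) (e q) x - TwoPhaseJC.phi t (e p) (e q) y| ≤
            |TwoPhaseJC.phi t (e p) (e q) x| + |TwoPhaseJC.phi t (e p) (e q) y| :=
          abs_sub _ _
        _ ≤ sx + sy := add_le_add h1 h2
  have hub : ∀ h : ℕ, ⟪V h x - V h y, ν⟫ ≤ S * ψ ν := by
    intro h
    rw [hterm h]
    calc (TwoPhaseJC.phi (π h).1 (e (π h).2.1) (e (π h).2.2.1) x -
          TwoPhaseJC.phi (π h).1 (e (π h).2.1) (e (π h).2.2.1) y) * ⟪W (π h).2.2.2, ν⟫ ≤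
        |(TwoPhaseJC.phi (π h).1 (e (π h).2.1) (e (π h).2.2.1) x -
          TwoPhaseJC.phi (π h).1 (e (π h).2.1) (e (π h).2.2.1) y) * ⟪W (π h).2.2.2, ν⟫| :=
        le_abs_self _
      _ = |TwoPhaseJC.phi (π h).1 (e (π h).2.1) (e (π h).2.2.1) x -
          TwoPhaseJC.phi (π h).1 (e (π h).2.1) (e (π h).2.2.1) y| * |⟪W (π h).2.2.2, ν⟫| :=
        abs_mul _ _
      _ ≤ S * ψ ν := mul_le_mul (hA_abs _ _ _) (hBabs _) (abs_nonneg _) hSnn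
  have hbdd : BddAbove (range fun h : ℕ => ⟪V h x - V h y, ν⟫) := by
    refine ⟨S * ψ ν, ?_⟩
    rintro _ ⟨h, rfl⟩
    exact hub h
  have hgoal : (if x = y then (0 : ℝ) else if x = 0 ∨ y = 0 then ψ ν else 2 * ψ ν) =
      S * ψ ν := by
    rw [hS, hsx, hsy]
    by_cases h1 : x = y
    · simp [h1]
    · rw [if_neg h1, if_neg h1]
      by_cases h2 : x = 0
      · have h3 : y ≠ 0 := fun hy0 => h1 (h2.trans hy0.symm)
        rw [if_pos (Or.inl h2), if_pos h2, if_neg h3]; ring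
      · by_cases h3 : y = 0
        · rw [if_pos (Or.inr h3), if_neg h2, if_pos h3]; ring
        · rw [if_neg (by tauto), if_neg h2, if_neg h3]; ring
  rw [hgoal]
  refine le_antisymm ?_ (ciSup_le hub)
  by_cases hxy : x = y
  · have hS0 : S = 0 := by rw [hS, if_pos hxy]
    rw [hS0, zero_mul]
    have h0 : ⟪V 0 x - V 0 y, ν⟫ = 0 := by rw [hterm 0, hxy, sub_self, zero_mul]
    calc (0 : ℝ) = ⟪V 0 x - V 0 y, ν⟫ := h0.symm
      _ ≤ ⨆ h : ℕ, ⟪V h x - V h y, ν⟫ := le_ciSup hbdd 0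
  · have hSge : 1 ≤ S := by
      rw [hS, if_neg hxy, hsx, hsy]
      by_cases h2 : x = 0
      · have h3 : y ≠ 0 := fun hy0 => hxy (h2.trans hy0.symm)
        rw [if_pos h2, if_neg h3]; norm_num
      · by_cases h3 : y = 0
        · rw [if_neg h2, if_pos h3]; norm_num
        · rw [if_neg h2, if_neg h3]; norm_num
    have hSle : S ≤ 2 := by
      rw [hS, if_neg hxy, hsx, hsy]; split_ifs <;> norm_num
    by_cases hν0 : ψ ν = 0
    · rw [hν0, mul_zero]
      obtain ⟨k0, hk0⟩ := hW0
      set h0 : ℕ := π.symm (0, 0, 0, k0) with hh0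
      have hπh0 : π h0 = (0, 0, 0, k0) := by rw [hh0]; exact Equiv.apply_symm_apply _ _
      have hz : ⟪V h0 x - V h0 y, ν⟫ = 0 := by
        rw [hterm h0, hπh0]
        show (TwoPhaseJC.phi 0 (e 0) (e 0) x - TwoPhaseJC.phi 0 (e 0) (e 0) y) *
          ⟪W k0, ν⟫ = 0
        rw [hk0]
        simp
      calc (0 : ℝ) = ⟪V h0 x - V h0 y, ν⟫ := hz.symm
        _ ≤ ⨆ h : ℕ, ⟪V h x - V h y, ν⟫ := le_ciSup hbdd h0
    · have hψpos : 0 < ψ ν := lt_of_le_of_ne hψν (Ne.symm hν0)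
      apply le_of_forall_sub_le
      intro ε hε
      set ε₁ : ℝ := min 1 (ε / (2 * ψ ν)) with hε₁
      set ε₂ : ℝ := min (ψ ν) (ε / 4) with hε₂
      have hε₁pos : 0 < ε₁ := lt_min one_pos (by positivity)
      have hε₂pos : 0 < ε₂ := lt_min hψpos (by positivity)
      have hε₁le1 : ε₁ ≤ 1 := min_le_left _ _
      have hε₂leψ : ε₂ ≤ ψ ν := min_le_left _ _
      have hε₁ψ : ε₁ * ψ ν ≤ ε / 2 := by
        have h1 : ε₁ ≤ ε / (2 * ψ ν) := min_le_right _ _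
        calc ε₁ * ψ ν ≤ ε / (2 * ψ ν) * ψ ν :=
            mul_le_mul_of_nonneg_right h1 hψν
          _ = ε / 2 := by field_simp
      have hSε₂ : S * ε₂ ≤ ε / 2 := by
        have h1 : ε₂ ≤ ε / 4 := min_le_right _ _
        calc S * ε₂ ≤ 2 * (ε / 4) :=
            mul_le_mul hSle h1 hε₂pos.le (by norm_num)
          _ ≤ ε / 2 := by linarith
      obtain ⟨t, p, q, hA⟩ := TwoPhaseJC.phi_approx he hxy hε₁pos
      rw [← hsx, ← hsy] at hA
      have hSA : S - ε₁ ≤ TwoPhaseJC.phi t (e p) (e q) x - TwoPhaseJC.phi t (e p) (e q) y := by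
        rw [hS, if_neg hxy]
        linarith
      obtain ⟨w, hwle, hwψ⟩ := TwoPhaseJC.exists_dual hψ ν
      have hwclos : w ∈ closure (range W) := hWclos hwle
      rw [Metric.mem_closure_iff] at hwclos
      obtain ⟨b, hbmem, hbdist⟩ := hwclos (ε₂ / (‖ν‖ + 1)) (by positivity)
      obtain ⟨k, rfl⟩ := hbmem
      have hBk : ψ ν - ε₂ ≤ ⟪W k, ν⟫ := by
        have h1 : |⟪w - W k, ν⟫| ≤ ‖w - W k‖ * ‖ν‖ := abs_real_inner_le_norm _ _
        have h2 : ‖w - W k‖ < ε₂ / (‖ν‖ + 1) := by rw [← dist_eq_norm]; exact hbdist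
        have h3 : ‖w - W k‖ * ‖ν‖ ≤ ε₂ := by
          have h4 : (0 : ℝ) < ‖ν‖ + 1 := by positivity
          have h5 : ‖w - W k‖ * ‖ν‖ ≤ ε₂ / (‖ν‖ + 1) * (‖ν‖ + 1) := by
            have h6 : ‖ν‖ ≤ ‖ν‖ + 1 := by linarith
            calc ‖w - W k‖ * ‖ν‖ ≤ ε₂ / (‖ν‖ + 1) * ‖ν‖ :=
                mul_le_mul_of_nonneg_right h2.le (norm_nonneg _)
              _ ≤ ε₂ / (‖ν‖ + 1) * (‖ν‖ + 1) :=
                mul_le_mul_of_nonneg_left h6 (by positivity)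
          rw [div_mul_cancel₀] at h5
          · exact h5
          · positivity
        rw [inner_sub_left] at h1
        have h7 := abs_le.1 h1
        have h8 := h7.2
        linarith [hwψ.le, hwψ.ge, h8]
      set h0 : ℕ := π.symm (t, p, q, k) with hh0
      have hπh0 : π h0 = (t, p, q, k) := by rw [hh0]; exact Equiv.apply_symm_apply _ _
      have hval : (S - ε₁) * (ψ ν - ε₂) ≤ ⟪V h0 x - V h0 y, ν⟫ := by
        rw [hterm h0, hπh0]
        show (S - ε₁) * (ψ ν - ε₂) ≤
          (TwoPhaseJC.phi t (e p) (e q) x - TwoPhaseJC.phi t (e p) (e q) y) * ⟪W k, ν⟫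
        apply mul_le_mul hSA hBk (by linarith) (by linarith)
      have hexp : S * ψ ν - ε ≤ (S - ε₁) * (ψ ν - ε₂) := by
        nlinarith [mul_nonneg hε₁pos.le hε₂pos.le]
      calc S * ψ ν - ε ≤ (S - ε₁) * (ψ ν - ε₂) := hexp
        _ ≤ ⟪V h0 x - V h0 y, ν⟫ := hval
        _ ≤ ⨆ h : ℕ, ⟪V h x - V h y, ν⟫ := le_ciSup hbdd h0


end
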